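/- For every integer n ≥ 6, the set S = {{1,2},{1,3},{2,3}} is a distance-equalizer set of the Kneser graph K(n,2); that is, for every two distinct 2-element subsets X, Y of {1,…,n} with X, Y ∉ S there exists Z ∈ S with d(X,Z) = d(Y,Z) in K(n,2). -/

import Mathlib

/-- The Johnson graph `J(n,k)`: vertices are the `k`-element subsets of an `n`-element set,
two vertices being adjacent iff their intersection has cardinality `k-1`. -/
def johnsonGraph (n k : ℕ) : SimpleGraph {A : Finset (Fin n) // A.card = k} where
  Adj A B := A ≠ B ∧ (A.1 ∩ B.1).card = k - 1
  symm := ⟨fun A B ⟨hne, hc⟩ => ⟨hne.symm, by rwa [Finset.inter_comm]⟩⟩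
  loopless := ⟨fun A ⟨hne, _⟩ => hne rfl⟩

/-- The Kneser graph `K(n,k)`: vertices are the `k`-element subsets of an `n`-element set,
two vertices being adjacent iff they are disjoint. -/
def kneserGraph (n k : ℕ) : SimpleGraph {A : Finset (Fin n) // A.card = k} where
  Adj A B := A ≠ B ∧ A.1 ∩ B.1 = ∅
  symm := ⟨fun A B ⟨hne, hc⟩ => ⟨hne.symm, by rwa [Finset.inter_comm]⟩⟩
  loopless := ⟨fun A ⟨hne, _⟩ => hne rfl⟩

/-- `S` is a distance-equalizer set of `G` if for every two distinct vertices
`u, v ∉ S` there is a vertex `x ∈ S` equidistant from `u` and `v`. -/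
def IsDistanceEqualizerSet {V : Type*} (G : SimpleGraph V) (S : Set V) : Prop :=
  ∀ u v : V, u ∉ S → v ∉ S → u ≠ v → ∃ x ∈ S, G.dist u x = G.dist v x

/-- The equidistant dimension of `G`: the minimum cardinality of a distance-equalizer set. -/
noncomputable def eqdim {V : Type*} [Fintype V] (G : SimpleGraph V) : ℕ :=
  sInf {m | ∃ S : Finset V, IsDistanceEqualizerSet G ↑S ∧ S.card = m}

instance (n k : ℕ) : DecidableRel (johnsonGraph n k).Adj :=
  fun A B => inferInstanceAs (Decidable (A ≠ B ∧ (A.1 ∩ B.1).card = k - 1))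

instance (n k : ℕ) : DecidableRel (kneserGraph n k).Adj :=
  fun A B => inferInstanceAs (Decidable (A ≠ B ∧ A.1 ∩ B.1 = ∅))

lemma kneser_dist_one {n : ℕ} (u x : {A : Finset (Fin n) // A.card = 2})
    (hne : u ≠ x) (hd : u.1 ∩ x.1 = ∅) : (kneserGraph n 2).dist u x = 1 :=
  SimpleGraph.dist_eq_one_iff_adj.mpr (And.intro hne hd)

lemma kneser_dist_two {n : ℕ} (hn : 6 ≤ n) (u x : {A : Finset (Fin n) // A.card = 2})
    (hne : u ≠ x) (hmeet : (u.1 ∩ x.1).Nonempty) : (kneserGraph n 2).dist u x = 2 := by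
  obtain ⟨w, hwsub, hwcard⟩ := Finset.exists_subset_card_eq (s := (u.1 ∪ x.1)ᶜ) (n := 2) (by
    have h1 : (u.1 ∪ x.1).card ≤ 4 := by
      have h := Finset.card_union_le u.1 x.1
      rw [u.2, x.2] at h; omega
    have h2 := Finset.card_compl (u.1 ∪ x.1)
    simp only [Fintype.card_fin] at h2
    omega)
  set W : {A : Finset (Fin n) // A.card = 2} := ⟨w, hwcard⟩ with hW
  have hdW : ∀ y : Finset (Fin n), y ⊆ u.1 ∪ x.1 → y ∩ w = ∅ := by
    intro y hy
    rw [Finset.eq_empty_iff_forall_notMem]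
    intro a ha
    rw [Finset.mem_inter] at ha
    exact (Finset.mem_compl.mp (hwsub ha.2)) (hy ha.1)
  have hneu : u ≠ W := by
    intro h
    obtain ⟨a, ha⟩ := Finset.card_pos.mp (by rw [u.2]; norm_num)
    have : a ∈ u.1 ∩ w := Finset.mem_inter.mpr ⟨ha, by rw [h] at ha; exact ha⟩
    rw [hdW u.1 Finset.subset_union_left] at this
    exact absurd this (Finset.notMem_empty a)
  have hnex : W ≠ x := by
    intro h
    obtain ⟨a, ha⟩ := Finset.card_pos.mp (by rw [x.2]; norm_num)
    rw [← h] at ha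
    have : a ∈ x.1 ∩ w := Finset.mem_inter.mpr ⟨by rw [h] at ha; exact ha, ha⟩
    rw [hdW x.1 Finset.subset_union_right] at this
    exact absurd this (Finset.notMem_empty a)
  have h1 : (kneserGraph n 2).Adj u W := And.intro hneu (hdW u.1 Finset.subset_union_left)
  have h2 : (kneserGraph n 2).Adj W x :=
    And.intro hnex (by rw [Finset.inter_comm]; exact hdW x.1 Finset.subset_union_right)
  let hwalk : (kneserGraph n 2).Walk u x := .cons h1 (.cons h2 .nil)
  have hle : (kneserGraph n 2).dist u x ≤ 2 := by
    have := SimpleGraph.dist_le hwalk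
    simpa [hwalk] using this
  have hne1 : (kneserGraph n 2).dist u x ≠ 1 := by
    intro h
    obtain ⟨a, ha⟩ := hmeet
    have := And.right (SimpleGraph.dist_eq_one_iff_adj.mp h)
    rw [this] at ha
    exact absurd ha (Finset.notMem_empty a)
  have hne0 : (kneserGraph n 2).dist u x ≠ 0 := by
    intro h
    rcases SimpleGraph.dist_eq_zero_iff_eq_or_not_reachable.mp h with h' | h'
    · exact hne h'
    · exact h' ⟨hwalk⟩
  omega

lemma kneser_prop_key (a0 a1 a2 b0 b1 b2 : Prop)
    (h1 : ¬(a0 ∧ a1)) (h2 : ¬(a0 ∧ a2)) (h3 : ¬(a1 ∧ a2))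
    (h4 : ¬(b0 ∧ b1)) (h5 : ¬(b0 ∧ b2)) (h6 : ¬(b1 ∧ b2)) :
    (((¬a0 ∧ ¬a1) ∧ (¬b0 ∧ ¬b1)) ∨ ((a0 ∨ a1) ∧ (b0 ∨ b1))) ∨
    (((¬a0 ∧ ¬a2) ∧ (¬b0 ∧ ¬b2)) ∨ ((a0 ∨ a2) ∧ (b0 ∨ b2))) ∨
    (((¬a1 ∧ ¬a2) ∧ (¬b1 ∧ ¬b2)) ∨ ((a1 ∨ a2) ∧ (b1 ∨ b2))) := by
  by_cases ha0 : a0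
  · by_cases hb0 : b0
    · exact Or.inl (Or.inr ⟨Or.inl ha0, Or.inl hb0⟩)
    by_cases hb1 : b1
    · exact Or.inl (Or.inr ⟨Or.inl ha0, Or.inr hb1⟩)
    by_cases hb2 : b2
    · exact Or.inr (Or.inl (Or.inr ⟨Or.inl ha0, Or.inr hb2⟩))
    · exact Or.inr (Or.inr (Or.inl ⟨⟨fun h => h1 ⟨ha0, h⟩, fun h => h2 ⟨ha0, h⟩⟩, hb1, hb2⟩))
  by_cases ha1 : a1
  · by_cases hb0 : b0
    · exact Or.inl (Or.inr ⟨Or.inr ha1, Or.inl hb0⟩)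
    by_cases hb1 : b1
    · exact Or.inl (Or.inr ⟨Or.inr ha1, Or.inr hb1⟩)
    by_cases hb2 : b2
    · exact Or.inr (Or.inr (Or.inr ⟨Or.inl ha1, Or.inr hb2⟩))
    · exact Or.inr (Or.inl (Or.inl ⟨⟨ha0, fun h => h3 ⟨ha1, h⟩⟩, hb0, hb2⟩))
  by_cases ha2 : a2
  · by_cases hb0 : b0
    · exact Or.inr (Or.inl (Or.inr ⟨Or.inr ha2, Or.inl hb0⟩))
    by_cases hb1 : b1
    · exact Or.inr (Or.inr (Or.inr ⟨Or.inr ha2, Or.inl hb1⟩))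
    by_cases hb2 : b2
    · exact Or.inr (Or.inl (Or.inr ⟨Or.inr ha2, Or.inr hb2⟩))
    · exact Or.inl (Or.inl ⟨⟨ha0, ha1⟩, hb0, hb1⟩)
  · by_cases hb0 : b0
    · exact Or.inr (Or.inr (Or.inl ⟨⟨ha1, ha2⟩, fun h => h4 ⟨hb0, h⟩, fun h => h5 ⟨hb0, h⟩⟩))
    by_cases hb1 : b1
    · exact Or.inr (Or.inl (Or.inl ⟨⟨ha0, ha2⟩, hb0, fun h => h6 ⟨hb1, h⟩⟩))
    · exact Or.inl (Or.inl ⟨⟨ha0, ha1⟩, hb0, hb1⟩)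

lemma kneser_inter_pair_empty {α : Type*} [DecidableEq α] (s : Finset α) (a b : α)
    (ha : a ∉ s) (hb : b ∉ s) : s ∩ {a, b} = ∅ := by
  rw [Finset.eq_empty_iff_forall_notMem]
  intro x hx
  rw [Finset.mem_inter, Finset.mem_insert, Finset.mem_singleton] at hx
  rcases hx.2 with rfl | rfl
  · exact ha hx.1
  · exact hb hx.1

lemma kneser_inter_pair_nonempty {α : Type*} [DecidableEq α] (s : Finset α) (a b : α)
    (h : a ∈ s ∨ b ∈ s) : (s ∩ ({a, b} : Finset α)).Nonempty := by
  rcases h with h | h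
  · exact ⟨a, Finset.mem_inter.mpr ⟨h, Finset.mem_insert_self a _⟩⟩
  · exact ⟨b, Finset.mem_inter.mpr ⟨h, Finset.mem_insert_of_mem (Finset.mem_singleton_self b)⟩⟩

/-- For every `n ≥ 6`, the set `S = {{1,2},{1,3},{2,3}}` (realized in `Fin n` as
`{{0,1},{0,2},{1,2}}`) is a distance-equalizer set of the Kneser graph `K(n,2)`. -/
theorem kneser_two_distanceEqualizer (n : ℕ) (hn : 6 ≤ n) :
    IsDistanceEqualizerSet (kneserGraph n 2)
      ({⟨{⟨0, by omega⟩, ⟨1, by omega⟩}, Finset.card_pair (Fin.ne_of_val_ne (by simp))⟩,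
        ⟨{⟨0, by omega⟩, ⟨2, by omega⟩}, Finset.card_pair (Fin.ne_of_val_ne (by simp))⟩,
        ⟨{⟨1, by omega⟩, ⟨2, by omega⟩}, Finset.card_pair (Fin.ne_of_val_ne (by simp))⟩} :
        Set {A : Finset (Fin n) // A.card = 2}) := by
  intro u v hu hv huv
  set e0 : Fin n := ⟨0, by omega⟩ with he0
  set e1 : Fin n := ⟨1, by omega⟩ with he1
  set e2 : Fin n := ⟨2, by omega⟩ with he2
  set x01 : {A : Finset (Fin n) // A.card = 2} :=
    ⟨{e0, e1}, Finset.card_pair (Fin.ne_of_val_ne (by simp))⟩ with hx01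
  set x02 : {A : Finset (Fin n) // A.card = 2} :=
    ⟨{e0, e2}, Finset.card_pair (Fin.ne_of_val_ne (by simp))⟩ with hx02
  set x12 : {A : Finset (Fin n) // A.card = 2} :=
    ⟨{e1, e2}, Finset.card_pair (Fin.ne_of_val_ne (by simp [he1, he2]))⟩ with hx12
  have hm01 : x01 ∈ ({x01, x02, x12} : Set _) := Set.mem_insert _ _
  have hm02 : x02 ∈ ({x01, x02, x12} : Set _) := Set.mem_insert_of_mem _ (Set.mem_insert _ _)
  have hm12 : x12 ∈ ({x01, x02, x12} : Set _) :=
    Set.mem_insert_of_mem _ (Set.mem_insert_of_mem _ rfl)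
  -- not equal to the equalizer vertices
  have hneu01 : u ≠ x01 := fun h => hu (h ▸ hm01)
  have hneu02 : u ≠ x02 := fun h => hu (h ▸ hm02)
  have hneu12 : u ≠ x12 := fun h => hu (h ▸ hm12)
  have hnev01 : v ≠ x01 := fun h => hv (h ▸ hm01)
  have hnev02 : v ≠ x02 := fun h => hv (h ▸ hm02)
  have hnev12 : v ≠ x12 := fun h => hv (h ▸ hm12)
  -- a 2-set other than {a,b} cannot contain both a and b
  have key : ∀ (w : {A : Finset (Fin n) // A.card = 2}) (a b : Fin n), a ≠ b →
      w.1 ≠ ({a, b} : Finset (Fin n)) → ¬(a ∈ w.1 ∧ b ∈ w.1) := by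
    rintro w a b hab hne ⟨ha, hb⟩
    apply hne
    refine (Finset.eq_of_subset_of_card_le ?_ ?_).symm
    · exact Finset.insert_subset ha (Finset.singleton_subset_iff.mpr hb)
    · rw [w.2, Finset.card_pair hab]
  have hne01 : e0 ≠ e1 := Fin.ne_of_val_ne (by simp)
  have hne02 : e0 ≠ e2 := Fin.ne_of_val_ne (by simp)
  have hne12 : e1 ≠ e2 := Fin.ne_of_val_ne (by simp [he1, he2])
  have h1 := key u e0 e1 hne01 (fun h => hneu01 (Subtype.ext h))
  have h2 := key u e0 e2 hne02 (fun h => hneu02 (Subtype.ext h))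
  have h3 := key u e1 e2 hne12 (fun h => hneu12 (Subtype.ext h))
  have h4 := key v e0 e1 hne01 (fun h => hnev01 (Subtype.ext h))
  have h5 := key v e0 e2 hne02 (fun h => hnev02 (Subtype.ext h))
  have h6 := key v e1 e2 hne12 (fun h => hnev12 (Subtype.ext h))
  rcases kneser_prop_key (e0 ∈ u.1) (e1 ∈ u.1) (e2 ∈ u.1) (e0 ∈ v.1) (e1 ∈ v.1) (e2 ∈ v.1)
      h1 h2 h3 h4 h5 h6 with
    (⟨⟨ha, hb⟩, hc, hd⟩ | ⟨ha, hb⟩) | (⟨⟨ha, hb⟩, hc, hd⟩ | ⟨ha, hb⟩) |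
    (⟨⟨ha, hb⟩, hc, hd⟩ | ⟨ha, hb⟩)
  · exact ⟨x01, hm01, by
      rw [kneser_dist_one u x01 hneu01 (kneser_inter_pair_empty u.1 e0 e1 ha hb),
        kneser_dist_one v x01 hnev01 (kneser_inter_pair_empty v.1 e0 e1 hc hd)]⟩
  · exact ⟨x01, hm01, by
      rw [kneser_dist_two hn u x01 hneu01 (kneser_inter_pair_nonempty u.1 e0 e1 ha),
        kneser_dist_two hn v x01 hnev01 (kneser_inter_pair_nonempty v.1 e0 e1 hb)]⟩
  · exact ⟨x02, hm02, by
      rw [kneser_dist_one u x02 hneu02 (kneser_inter_pair_empty u.1 e0 e2 ha hb),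
        kneser_dist_one v x02 hnev02 (kneser_inter_pair_empty v.1 e0 e2 hc hd)]⟩
  · exact ⟨x02, hm02, by
      rw [kneser_dist_two hn u x02 hneu02 (kneser_inter_pair_nonempty u.1 e0 e2 ha),
        kneser_dist_two hn v x02 hnev02 (kneser_inter_pair_nonempty v.1 e0 e2 hb)]⟩
  · exact ⟨x12, hm12, by
      rw [kneser_dist_one u x12 hneu12 (kneser_inter_pair_empty u.1 e1 e2 ha hb),
        kneser_dist_one v x12 hnev12 (kneser_inter_pair_empty v.1 e1 e2 hc hd)]⟩
  · exact ⟨x12, hm12, by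
      rw [kneser_dist_two hn u x12 hneu12 (kneser_inter_pair_nonempty u.1 e1 e2 ha),
        kneser_dist_two hn v x12 hnev12 (kneser_inter_pair_nonempty v.1 e1 e2 hb)]⟩
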